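/- arXiv:1103.3114 — 4 statements merged into one kernel-verified Lean document; each statement's English description precedes it below -/
import Mathlib

section
/- (Lemma 1) Let X_1,…,X_n be an SLP representing T = val(X_n), and let u, v be positions with 1 ≤ u < v ≤ |T|. Then there exists exactly one pair consisting of a variable X_i = X_ℓ X_r and an interval [u':v'] ∈ itv(X_i) such that [u:v] ⊆ [u':v'], u' ≤ u ≤ u' + |val(X_ℓ)| − 1, and u' + |val(X_ℓ)| ≤ v ≤ v'. In particular, the variable X_i with this property is unique. -/
/-- The substring `S[u:v]` (1-indexed, inclusive; empty if `v < u`). -/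
def substr {α : Type*} (S : List α) (u v : ℕ) : List α := (S.drop (u - 1)).take (v + 1 - u)

/-- `pre(S,q) = S[1:min(q,|S|)]`, the length-`q` prefix of `S`. -/
def pre {α : Type*} (S : List α) (q : ℕ) : List α := S.take q

/-- `suf(S,q) = S[max(1,|S|-q+1):|S|]`, the length-`q` suffix of `S`. -/
def suf {α : Type*} (S : List α) (q : ℕ) : List α := S.drop (S.length - q)

/-- `Occ(T,P) = {k ≥ 1 : T[k:k+|P|-1] = P}`. -/
def Occ {α : Type*} (T P : List α) : Set ℕ := {k | 1 ≤ k ∧ substr T k (k + P.length - 1) = P}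

/-- A straight-line program of size `n`: each variable `X_i` (0-indexed here) is either a
terminal `a ∈ Σ` or a concatenation `X_ℓ X_r` with `ℓ, r < i`. -/
structure SLP (α : Type*) (n : ℕ) where
  rule : Fin n → α ⊕ (Fin n × Fin n)
  wf : ∀ i l r, rule i = Sum.inr (l, r) → l < i ∧ r < i

namespace SLP

variable {α : Type*} {n : ℕ}

/-- The string `val(X_i)` derived by variable `X_i`. -/
def val (S : SLP α n) : Fin n → List α
  | i =>
    match h : S.rule i with
    | Sum.inl a => [a]
    | Sum.inr (l, r) => S.val l ++ S.val r
termination_by i => i.val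
decreasing_by
  · exact (S.wf i l r h).1
  · exact (S.wf i l r h).2

/-- The set `itv(X_i)` of occurrence intervals of `X_i` in the derivation of `T = val(X_n)`. -/
def itv (S : SLP α n) : Fin n → Set (ℕ × ℕ)
  | i =>
    if i.val = n - 1 then {(1, (S.val i).length)}
    else
      {p | ∃ k l, ∃ h : S.rule k = Sum.inr (l, i),
          ∃ uv ∈ S.itv k, p = (uv.1 + (S.val l).length, uv.2)} ∪
      {p | ∃ k r, ∃ h : S.rule k = Sum.inr (i, r),
          ∃ uv ∈ S.itv k, p = (uv.1, uv.1 + (S.val i).length - 1)}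
termination_by i => n - i.val
decreasing_by
  · have h1 : (i : ℕ) < (k : ℕ) := (S.wf k l i h).2
    have h2 : (k : ℕ) < n := k.isLt
    omega
  · have h1 : (i : ℕ) < (k : ℕ) := (S.wf k i r h).1
    have h2 : (k : ℕ) < n := k.isLt
    omega

/-- `vOcc(X_i) = |itv(X_i)|`. -/
noncomputable def vOcc (S : SLP α n) (i : Fin n) : ℕ := (S.itv i).ncard

end SLP
namespace SLP
variable {α : Type*} {n : ℕ} (S : SLP α n)

lemma val_inl {i : Fin n} {a : α} (h : S.rule i = Sum.inl a) : S.val i = [a] := by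
  rw [SLP.val]; split <;> simp_all

lemma val_inr {i l r : Fin n} (h : S.rule i = Sum.inr (l, r)) :
    S.val i = S.val l ++ S.val r := by
  rw [SLP.val]; split <;> simp_all

lemma itv_root {i : Fin n} (h : i.val = n - 1) : S.itv i = {(1, (S.val i).length)} := by
  rw [SLP.itv, if_pos h]

lemma itv_child {i : Fin n} (h : i.val ≠ n - 1) : S.itv i =
      {p | ∃ k l, ∃ _ : S.rule k = Sum.inr (l, i),
          ∃ uv ∈ S.itv k, p = (uv.1 + (S.val l).length, uv.2)} ∪
      {p | ∃ k r, ∃ _ : S.rule k = Sum.inr (i, r),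
          ∃ uv ∈ S.itv k, p = (uv.1, uv.1 + (S.val i).length - 1)} := by
  rw [SLP.itv, if_neg h]

lemma val_len_pos_aux : ∀ m, ∀ i : Fin n, i.val < m → 0 < (S.val i).length := by
  intro m
  induction m with
  | zero => omega
  | succ m ih =>
    intro i him
    cases h : S.rule i with
    | inl a => simp [S.val_inl h]
    | inr lr =>
      obtain ⟨l, r⟩ := lr
      have hl := (S.wf i l r h).1
      have := ih l (by omega)
      simp [S.val_inr h]; omega

lemma val_len_pos (i : Fin n) : 0 < (S.val i).length :=
  S.val_len_pos_aux i.val.succ i (Nat.lt_succ_self _)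

/-- Descent relation: occurrence `(i, q)` is reachable from occurrence `(k, p)`. -/
inductive Desc (S : SLP α n) : Fin n → ℕ × ℕ → Fin n → ℕ × ℕ → Prop where
  | refl (k : Fin n) (p : ℕ × ℕ) : Desc S k p k p
  | left {k : Fin n} {a b : ℕ} {l r i : Fin n} {q : ℕ × ℕ}
      (h : S.rule k = Sum.inr (l, r))
      (hd : Desc S l (a, a + (S.val l).length - 1) i q) : Desc S k (a, b) i q
  | right {k : Fin n} {a b : ℕ} {l r i : Fin n} {q : ℕ × ℕ}
      (h : S.rule k = Sum.inr (l, r))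
      (hd : Desc S r (a + (S.val l).length, b) i q) : Desc S k (a, b) i q

lemma Desc.trans {S : SLP α n} {k j i : Fin n} {p q s : ℕ × ℕ}
    (h1 : Desc S k p j q) (h2 : Desc S j q i s) : Desc S k p i s := by
  induction h1 with
  | refl => exact h2
  | left h hd ih => exact Desc.left h (ih h2)
  | right h hd ih => exact Desc.right h (ih h2)

lemma desc_bounds' {S : SLP α n} {k i : Fin n} {p q : ℕ × ℕ}
    (hd : Desc S k p i q) :
    p.2 + 1 = p.1 + (S.val k).length →
      q.2 + 1 = q.1 + (S.val i).length ∧ p.1 ≤ q.1 ∧ q.2 ≤ p.2 := by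
  induction hd with
  | refl => exact fun h => ⟨h, le_refl _, le_refl _⟩
  | @left k a' b' l r i q h hd ih =>
    intro hab
    simp only at hab ⊢
    have hL := S.val_len_pos l
    have hR := S.val_len_pos r
    have hlen : (S.val k).length = (S.val l).length + (S.val r).length := by
      simp [S.val_inr h]
    obtain ⟨h1, h2, h3⟩ := ih (by simp; omega)
    simp at h2 h3
    exact ⟨h1, h2, by omega⟩
  | @right k a' b' l r i q h hd ih =>
    intro hab
    simp only at hab ⊢
    have hL := S.val_len_pos l
    have hlen : (S.val k).length = (S.val l).length + (S.val r).length := by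
      simp [S.val_inr h]
    obtain ⟨h1, h2, h3⟩ := ih (by simp; omega)
    simp at h2 h3
    exact ⟨h1, by omega, h3⟩

lemma desc_bounds {S : SLP α n} {k i : Fin n} {a b c d : ℕ}
    (hd : Desc S k (a, b) i (c, d)) (hab : b + 1 = a + (S.val k).length) :
    d + 1 = c + (S.val i).length ∧ a ≤ c ∧ d ≤ b :=
  desc_bounds' hd hab

lemma desc_to_itv {S : SLP α n} {k i : Fin n} {p q : ℕ × ℕ}
    (hd : Desc S k p i q) (hp : p ∈ S.itv k) : q ∈ S.itv i := by
  induction hd with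
  | refl => exact hp
  | @left k a b l r i q h hd ih =>
    apply ih
    have hlk : l.val ≠ n - 1 := by
      have h1 := (S.wf k l r h).1
      have h2 := k.isLt
      omega
    rw [S.itv_child hlk]
    exact Or.inr ⟨k, r, h, (a, b), hp, rfl⟩
  | @right k a b l r i q h hd ih =>
    apply ih
    have hrk : r.val ≠ n - 1 := by
      have h1 := (S.wf k l r h).2
      have h2 := k.isLt
      omega
    rw [S.itv_child hrk]
    exact Or.inl ⟨k, l, h, (a, b), hp, rfl⟩

lemma itv_to_desc_aux (S : SLP α n) (hn : 0 < n) :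
    ∀ m (i : Fin n) (q : ℕ × ℕ), n - i.val ≤ m → q ∈ S.itv i →
      Desc S ⟨n - 1, Nat.sub_lt hn one_pos⟩
        (1, (S.val ⟨n - 1, Nat.sub_lt hn one_pos⟩).length) i q := by
  intro m
  induction m with
  | zero => intro i; have := i.isLt; omega
  | succ m ih =>
    intro i q him hq
    by_cases hi : i.val = n - 1
    · have : i = ⟨n - 1, Nat.sub_lt hn one_pos⟩ := Fin.ext hi
      subst this
      rw [S.itv_root hi] at hq
      simp at hq
      subst hq
      exact Desc.refl _ _
    · rw [S.itv_child hi] at hq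
      rcases hq with ⟨k, l, h, ⟨a, b⟩, huv, hq⟩ | ⟨k, r, h, ⟨a, b⟩, huv, hq⟩
      · have hk : i.val < k.val := (S.wf k l i h).2
        have := k.isLt
        have hd := ih k (a, b) (by omega) huv
        subst hq
        exact hd.trans (Desc.right h (Desc.refl _ _))
      · have hk : i.val < k.val := (S.wf k i r h).1
        have := k.isLt
        have hd := ih k (a, b) (by omega) huv
        subst hq
        exact hd.trans (Desc.left h (Desc.refl _ _))

lemma cross_exists (S : SLP α n) (u v : ℕ) (huv : u < v) :
    ∀ m (k : Fin n) (a b : ℕ), k.val ≤ m → b + 1 = a + (S.val k).length →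
      a ≤ u → v ≤ b →
      ∃ (i : Fin n) (c d : ℕ) (l r : Fin n),
        Desc S k (a, b) i (c, d) ∧ S.rule i = Sum.inr (l, r) ∧
        c ≤ u ∧ v ≤ d ∧ u ≤ c + (S.val l).length - 1 ∧ c + (S.val l).length ≤ v := by
  intro m
  induction m with
  | zero =>
    intro k a b hk hab hau hvb
    cases h : S.rule k with
    | inl x => simp [S.val_inl h] at hab; omega
    | inr lr =>
      obtain ⟨l, r⟩ := lr
      have := (S.wf k l r h).1
      omega
  | succ m ih =>
    intro k a b hk hab hau hvb
    cases h : S.rule k with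
    | inl x => simp [S.val_inl h] at hab; omega
    | inr lr =>
      obtain ⟨l, r⟩ := lr
      have hlk := (S.wf k l r h).1
      have hrk := (S.wf k l r h).2
      have hL := S.val_len_pos l
      have hR := S.val_len_pos r
      have hlen : (S.val k).length = (S.val l).length + (S.val r).length := by
        simp [S.val_inr h]
      by_cases hc : u ≤ a + (S.val l).length - 1 ∧ a + (S.val l).length ≤ v
      · exact ⟨k, a, b, l, r, Desc.refl _ _, h, hau, hvb, hc.1, hc.2⟩
      · rcases Nat.lt_or_ge v (a + (S.val l).length) with hv' | hv'
        · -- [u,v] inside left child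
          obtain ⟨i, c, d, l', r', hd, hr', h1, h2, h3, h4⟩ :=
            ih l a (a + (S.val l).length - 1) (by omega) (by omega) hau (by omega)
          exact ⟨i, c, d, l', r', Desc.left h hd, hr', h1, h2, h3, h4⟩
        · -- either crossing or inside right child
          have hu' : a + (S.val l).length ≤ u := by omega
          obtain ⟨i, c, d, l', r', hd, hr', h1, h2, h3, h4⟩ :=
            ih r (a + (S.val l).length) b (by omega) (by omega) hu' hvb
          exact ⟨i, c, d, l', r', Desc.right h hd, hr', h1, h2, h3, h4⟩

lemma rule_inr_inj {S : SLP α n} {k l r l' r' : Fin n}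
    (h : S.rule k = Sum.inr (l, r)) (h' : S.rule k = Sum.inr (l', r')) :
    l = l' ∧ r = r' := by
  rw [h] at h'; simpa using h'

lemma cross_unique (S : SLP α n) (u v : ℕ) (huv : u < v) :
    ∀ m (k : Fin n) (a b : ℕ), k.val ≤ m → b + 1 = a + (S.val k).length →
      a ≤ u → v ≤ b →
      ∀ (i₁ : Fin n) (c₁ d₁ : ℕ) (l₁ r₁ : Fin n) (i₂ : Fin n) (c₂ d₂ : ℕ) (l₂ r₂ : Fin n),
        Desc S k (a, b) i₁ (c₁, d₁) → S.rule i₁ = Sum.inr (l₁, r₁) →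
        c₁ ≤ u → v ≤ d₁ → u ≤ c₁ + (S.val l₁).length - 1 → c₁ + (S.val l₁).length ≤ v →
        Desc S k (a, b) i₂ (c₂, d₂) → S.rule i₂ = Sum.inr (l₂, r₂) →
        c₂ ≤ u → v ≤ d₂ → u ≤ c₂ + (S.val l₂).length - 1 → c₂ + (S.val l₂).length ≤ v →
        i₁ = i₂ ∧ c₁ = c₂ ∧ d₁ = d₂ := by
  intro m
  induction m with
  | zero =>
    intro k a b hk hab hau hvb i₁ c₁ d₁ l₁ r₁ i₂ c₂ d₂ l₂ r₂ hd1 hr1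
    intro _ _ _ _ _ _ _ _ _ _
    exfalso
    have h1 := desc_bounds hd1 hab
    -- k.val = 0, so rule k must be inl (else children < 0); but also any desc stays at k
    cases h : S.rule k with
    | inl x => simp [S.val_inl h] at hab; omega
    | inr lr => obtain ⟨l, r⟩ := lr; have := (S.wf k l r h).1; omega
  | succ m ih =>
    intro k a b hk hab hau hvb i₁ c₁ d₁ l₁ r₁ i₂ c₂ d₂ l₂ r₂
    intro hd1 hr1 hc1 hv1 hx1 hy1 hd2 hr2 hc2 hv2 hx2 hy2
    cases hd1 with
    | refl =>
      cases hd2 with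
      | refl => exact ⟨rfl, rfl, rfl⟩
      | @left _ _ _ l r _ _ h hd =>
        obtain ⟨hl, hr⟩ := rule_inr_inj hr1 h
        subst hl
        have hL := S.val_len_pos l₁
        have hb := desc_bounds hd (by have := S.val_len_pos l₁; omega)
        -- v ≤ d₂ ≤ a + L - 1, but a + L ≤ v
        omega
      | @right _ _ _ l r _ _ h hd =>
        obtain ⟨hl, hr⟩ := rule_inr_inj hr1 h
        subst hl
        have hL := S.val_len_pos l₁
        have hlen : (S.val k).length = (S.val l₁).length + (S.val r).length := by
          simp [S.val_inr h]
        have hb := desc_bounds hd (by omega)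
        -- c₂ ≥ a + L, c₂ ≤ u, u ≤ a + L - 1
        omega
    | @left _ _ _ l r _ _ h hd =>
      cases hd2 with
      | refl =>
        obtain ⟨hl, hr⟩ := rule_inr_inj hr2 h
        subst hl
        have hL := S.val_len_pos l₂
        have hb := desc_bounds hd (by omega)
        omega
      | @left _ _ _ l' r' _ _ h' hd' =>
        obtain ⟨hl, hr⟩ := rule_inr_inj h h'
        subst hl; subst hr
        have hL := S.val_len_pos l
        have hlk := (S.wf k l r h).1
        have hb := desc_bounds hd (by omega)
        exact ih l a (a + (S.val l).length - 1) (by omega) (by omega) hau (by omega)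
          i₁ c₁ d₁ l₁ r₁ i₂ c₂ d₂ l₂ r₂ hd hr1 hc1 hv1 hx1 hy1 hd' hr2 hc2 hv2 hx2 hy2
      | @right _ _ _ l' r' _ _ h' hd' =>
        obtain ⟨hl, hr⟩ := rule_inr_inj h h'
        subst hl; subst hr
        have hL := S.val_len_pos l
        have hlen : (S.val k).length = (S.val l).length + (S.val r).length := by
          simp [S.val_inr h]
        have hb1 := desc_bounds hd (by omega)
        have hb2 := desc_bounds hd' (by omega)
        -- v ≤ d₁ ≤ a+L-1 ; c₂ ≥ a+L ; c₂ ≤ u ; u < v : contradiction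
        omega
    | @right _ _ _ l r _ _ h hd =>
      cases hd2 with
      | refl =>
        obtain ⟨hl, hr⟩ := rule_inr_inj hr2 h
        subst hl
        have hL := S.val_len_pos l₂
        have hlen : (S.val k).length = (S.val l₂).length + (S.val r).length := by
          simp [S.val_inr h]
        have hb := desc_bounds hd (by omega)
        omega
      | @left _ _ _ l' r' _ _ h' hd' =>
        obtain ⟨hl, hr⟩ := rule_inr_inj h h'
        subst hl; subst hr
        have hL := S.val_len_pos l
        have hlen : (S.val k).length = (S.val l).length + (S.val r).length := by
          simp [S.val_inr h]
        have hb1 := desc_bounds hd (by omega)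
        have hb2 := desc_bounds hd' (by omega)
        omega
      | @right _ _ _ l' r' _ _ h' hd' =>
        obtain ⟨hl, hr⟩ := rule_inr_inj h h'
        subst hl; subst hr
        have hL := S.val_len_pos l
        have hR := S.val_len_pos r
        have hrk := (S.wf k l r h).2
        have hlen : (S.val k).length = (S.val l).length + (S.val r).length := by
          simp [S.val_inr h]
        have hb1 := desc_bounds hd (by omega)
        exact ih r (a + (S.val l).length) b (by omega) (by omega) (by omega) hvb
          i₁ c₁ d₁ l₁ r₁ i₂ c₂ d₂ l₂ r₂ hd hr1 hc1 hv1 hx1 hy1 hd' hr2 hc2 hv2 hx2 hy2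

end SLP
/-- Lemma 1: for `1 ≤ u < v ≤ |T|` there is exactly one pair of a
concatenation variable `X_i = X_ℓ X_r` together with an occurrence interval
`[u':v'] ∈ itv(X_i)` such that `[u:v] ⊆ [u':v']`, `u' ≤ u ≤ u' + |val(X_ℓ)| - 1` and
`u' + |val(X_ℓ)| ≤ v ≤ v'`; in particular the variable `X_i` with this property is unique. -/
theorem slp_crossing_unique {α : Type*} {n : ℕ} (S : SLP α n) (hn : 0 < n)
    (u v : ℕ) (hu : 1 ≤ u) (huv : u < v)
    (hv : v ≤ (S.val ⟨n - 1, Nat.sub_lt hn one_pos⟩).length) :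
    (∃! p : Fin n × ℕ × ℕ, ∃ l r, S.rule p.1 = Sum.inr (l, r) ∧
        (p.2.1, p.2.2) ∈ S.itv p.1 ∧
        p.2.1 ≤ u ∧ v ≤ p.2.2 ∧
        u ≤ p.2.1 + (S.val l).length - 1 ∧
        p.2.1 + (S.val l).length ≤ v) ∧
    (∃! i : Fin n, ∃ l r u' v', S.rule i = Sum.inr (l, r) ∧
        (u', v') ∈ S.itv i ∧
        u' ≤ u ∧ v ≤ v' ∧
        u ≤ u' + (S.val l).length - 1 ∧
        u' + (S.val l).length ≤ v) := by
  set root : Fin n := ⟨n - 1, Nat.sub_lt hn one_pos⟩ with hroot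
  have hrootmem : ((1 : ℕ), (S.val root).length) ∈ S.itv root := by
    rw [S.itv_root rfl]; rfl
  have hinv : (S.val root).length + 1 = 1 + (S.val root).length := by omega
  obtain ⟨i, c, d, l, r, hd, hr, h1, h2, h3, h4⟩ :=
    S.cross_exists u v huv n root 1 (S.val root).length (by omega) hinv hu hv
  have hmem : (c, d) ∈ S.itv i := SLP.desc_to_itv hd hrootmem
  have key : ∀ (i' : Fin n) (c' d' : ℕ) (l' r' : Fin n),
      S.rule i' = Sum.inr (l', r') → (c', d') ∈ S.itv i' →
      c' ≤ u → v ≤ d' → u ≤ c' + (S.val l').length - 1 → c' + (S.val l').length ≤ v →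
      i' = i ∧ c' = c ∧ d' = d := by
    intro i' c' d' l' r' hr' hmem' ha' hb' hc' hd'
    have hdesc' : SLP.Desc S root (1, (S.val root).length) i' (c', d') :=
      S.itv_to_desc_aux hn n i' (c', d') (by omega) hmem'
    exact S.cross_unique u v huv n root 1 (S.val root).length (by omega) hinv hu hv
      i' c' d' l' r' i c d l r hdesc' hr' ha' hb' hc' hd' hd hr h1 h2 h3 h4
  constructor
  · refine ⟨(i, c, d), ⟨l, r, hr, hmem, h1, h2, h3, h4⟩, ?_⟩
    rintro ⟨i', c', d'⟩ ⟨l', r', hr', hmem', ha', hb', hc', hd'⟩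
    obtain ⟨e1, e2, e3⟩ := key i' c' d' l' r' hr' hmem' ha' hb' hc' hd'
    simp [e1, e2, e3]
  · refine ⟨i, ⟨l, r, c, d, hr, hmem, h1, h2, h3, h4⟩, ?_⟩
    rintro i' ⟨l', r', c', d', hr', hmem', ha', hb', hc', hd'⟩
    exact (key i' c' d' l' r' hr' hmem' ha' hb' hc' hd').1
end

section
/- (Correctness of the main algorithm) Let X_1,…,X_n be an SLP representing T = val(X_n) and let q ≥ 2. Then for every q-gram P ∈ Σ^q, |Occ(T, P)| = Σ_{i : X_i = X_ℓ X_r} vOcc(X_i)·|Occ(t_i, P)|, where the sum ranges over all variables X_i whose rule is a concatenation X_i = X_ℓ X_r. -/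
namespace SLP

/-- For a concatenation variable `X_i = X_ℓ X_r`, the string
`t_i = suf(val(X_ℓ), q-1) · pre(val(X_r), q-1)` (and `[]` for terminal variables). -/
def tstr {α : Type*} {n : ℕ} (S : SLP α n) (q : ℕ) (i : Fin n) : List α :=
  match S.rule i with
  | Sum.inl _ => []
  | Sum.inr (l, r) => suf (S.val l) (q - 1) ++ pre (S.val r) (q - 1)

end SLP

section Occurrences

variable {α : Type*} {T P : List α}

theorem mem_Occ_iff (hP : P ≠ []) {p : ℕ} :
    p ∈ Occ T P ↔ 0 < p ∧ (T.drop (p - 1)).take P.length = P := by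
  have hlen : p + P.length - 1 + 1 - p = P.length := by
    have := List.length_pos_iff.mpr hP
    omega
  simp only [Occ, substr, Set.mem_ofPred_eq, hlen, Nat.one_le_iff_ne_zero, Nat.pos_iff_ne_zero]

theorem add_length_le_of_mem_Occ (hP : P ≠ []) {p : ℕ} (h : p ∈ Occ T P) :
    0 < p ∧ p + P.length ≤ T.length + 1 := by
  obtain ⟨hp, htake⟩ := (mem_Occ_iff hP).1 h
  have := congrArg List.length htake
  have := List.length_pos_iff.mpr hP
  simp only [List.length_take, List.length_drop] at *
  omega

theorem finite_Occ (hP : P ≠ []) : (Occ T P).Finite :=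
  (Set.finite_Iic T.length).subset fun _ hp => by
    have := add_length_le_of_mem_Occ hP hp
    have := List.length_pos_iff.mpr hP
    simp only [Set.mem_Iic]
    omega

theorem Occ_nil (hP : P ≠ []) : Occ [] P = ∅ :=
  Set.eq_empty_of_forall_notMem fun _ hp => by
    have := add_length_le_of_mem_Occ hP hp
    have := List.length_pos_iff.mpr hP
    simp only [List.length_nil] at *
    omega

theorem take_drop_append_append {A W B : List α} {k m : ℕ} (h : k + m ≤ W.length) :
    ((A ++ W ++ B).drop (A.length + k)).take m = (W.drop k).take m := by
  rw [List.append_assoc, List.drop_append, List.drop_of_length_le (by omega),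
    List.nil_append, Nat.add_sub_cancel_left, List.drop_append_of_le_length (by omega),
    List.take_append_of_le_length (by simp; omega)]

theorem mem_Occ_iff_add_mem_Occ_append {A W B : List α} (hP : P ≠ []) {k : ℕ} :
    k ∈ Occ W P ↔
      0 < k ∧ k + P.length ≤ W.length + 1 ∧ A.length + k ∈ Occ (A ++ W ++ B) P := by
  constructor
  · intro hk
    obtain ⟨hk0, hkW⟩ := add_length_le_of_mem_Occ hP hk
    refine ⟨hk0, hkW, (mem_Occ_iff hP).2 ⟨by omega, ?_⟩⟩
    rw [Nat.add_sub_assoc hk0, take_drop_append_append (by omega)]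
    exact ((mem_Occ_iff hP).1 hk).2
  · rintro ⟨hk0, hkW, hk⟩
    refine (mem_Occ_iff hP).2 ⟨hk0, ?_⟩
    rw [← take_drop_append_append (A := A) (B := B) (by omega), ← Nat.add_sub_assoc hk0]
    exact ((mem_Occ_iff hP).1 hk).2

end Occurrences

namespace SLP

variable {α : Type*} {n : ℕ} {S : SLP α n} {q p : ℕ}

theorem val_of_rule_inl {i : Fin n} {a : α} (h : S.rule i = .inl a) : S.val i = [a] := by
  rw [val]; split <;> simp_all

theorem val_of_rule_inr {i l r : Fin n} (h : S.rule i = .inr (l, r)) :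
    S.val i = S.val l ++ S.val r := by
  rw [val]; split <;> simp_all

theorem tstr_of_rule_inl {i : Fin n} {a : α} (h : S.rule i = .inl a) : S.tstr q i = [] := by
  rw [tstr]; split <;> simp_all

theorem tstr_of_rule_inr {i l r : Fin n} (h : S.rule i = .inr (l, r)) :
    S.tstr q i = suf (S.val l) (q - 1) ++ pre (S.val r) (q - 1) := by
  rw [tstr]; split <;> simp_all

/-- A pair `(i, o)` encodes a node of the derivation tree labelled `X_i` whose string starts
at the 0-based offset `o` in the string of the node the derivation started from. -/
def Step (S : SLP α n) (x y : Fin n × ℕ) : Prop :=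
  ∃ l r, S.rule x.1 = .inr (l, r) ∧ (y = (l, x.2) ∨ y = (r, x.2 + (S.val l).length))

def Reach (S : SLP α n) : Fin n × ℕ → Fin n × ℕ → Prop := Relation.ReflTransGen S.Step

theorem Reach.exists_append {x y : Fin n × ℕ} (h : S.Reach x y) :
    ∃ A B, S.val x.1 = A ++ S.val y.1 ++ B ∧ x.2 + A.length = y.2 := by
  induction h with
  | refl => exact ⟨[], [], by simp, rfl⟩
  | tail _ hstep ih =>
    obtain ⟨A, B, hval, hoff⟩ := ih
    obtain ⟨l, r, hrule, rfl | rfl⟩ := hstep <;> rw [val_of_rule_inr hrule] at hval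
    · exact ⟨A, S.val r ++ B, by simp [hval], hoff⟩
    · exact ⟨A ++ S.val l, B, by simp [hval], by simp only [List.length_append]; omega⟩

theorem Reach.nested {x y : Fin n × ℕ} (h : S.Reach x y) :
    x.2 ≤ y.2 ∧ y.2 + (S.val y.1).length ≤ x.2 + (S.val x.1).length := by
  obtain ⟨A, B, hval, hoff⟩ := h.exists_append
  have := congrArg List.length hval
  simp only [List.length_append] at this
  omega

theorem step_iff_of_rule_inr {x y : Fin n × ℕ} {l r : Fin n} (h : S.rule x.1 = .inr (l, r)) :
    S.Step x y ↔ y = (l, x.2) ∨ y = (r, x.2 + (S.val l).length) := by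
  simp [Step, h]

theorem Step.disjoint {x y y' : Fin n × ℕ} (h : S.Step x y) (h' : S.Step x y')
    (hne : y ≠ y') :
    y.2 + (S.val y.1).length ≤ y'.2 ∨ y'.2 + (S.val y'.1).length ≤ y.2 := by
  obtain ⟨l, r, hrule, rfl | rfl⟩ := h <;>
    rcases (step_iff_of_rule_inr hrule).1 h' with rfl | rfl <;> simp_all

/-- The window of positions `p, …, p + q - 1` (1-based, as in `Occ`) lies inside the node `x`. -/
def Covers (S : SLP α n) (q p : ℕ) (x : Fin n × ℕ) : Prop :=
  x.2 < p ∧ p + q ≤ x.2 + (S.val x.1).length + 1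

/-- The window meets both halves of `x`. -/
def Straddles (S : SLP α n) (q p : ℕ) (x : Fin n × ℕ) : Prop :=
  S.Covers q p x ∧ ∃ l r, S.rule x.1 = .inr (l, r) ∧
    p ≤ x.2 + (S.val l).length ∧ x.2 + (S.val l).length + 1 < p + q

theorem not_straddles_of_rule_inl {x : Fin n × ℕ} {a : α} (h : S.rule x.1 = .inl a) :
    ¬ S.Straddles q p x := by
  rintro ⟨-, l, r, hrule, -⟩
  simp [h] at hrule

theorem straddles_iff_of_rule_inr {x : Fin n × ℕ} {l r : Fin n}
    (h : S.rule x.1 = .inr (l, r)) :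
    S.Straddles q p x ↔ x.2 < p ∧ p ≤ x.2 + (S.val l).length ∧
      x.2 + (S.val l).length + 1 < p + q ∧
      p + q ≤ x.2 + (S.val l).length + (S.val r).length + 1 := by
  simp only [Straddles, Covers, h, Sum.inr.injEq, Prod.mk.injEq, val_of_rule_inr h,
    List.length_append, and_assoc, exists_and_left, exists_eq_left']
  omega

theorem Reach.covers {x y : Fin n × ℕ} (h : S.Reach x y) (hy : S.Covers q p y) :
    S.Covers q p x := by
  have := h.nested
  unfold Covers at *
  omega

theorem Step.not_covers_of_straddles {x y : Fin n × ℕ} (h : S.Step x y)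
    (hx : S.Straddles q p x) : ¬ S.Covers q p y := by
  obtain ⟨-, l, r, hrule, hsplit⟩ := hx
  rcases (step_iff_of_rule_inr hrule).1 h with rfl | rfl <;> simp only [Covers] <;> omega

theorem Reach.eq_of_straddles_of_covers {x y : Fin n × ℕ} (h : S.Reach x y)
    (hx : S.Straddles q p x) (hy : S.Covers q p y) : y = x := by
  rcases h.cases_head with rfl | ⟨c, hxc, hcy⟩
  · rfl
  · exact absurd (Reach.covers hcy hy) (hxc.not_covers_of_straddles hx)

theorem Reach.eq_of_straddles {x y y' : Fin n × ℕ} (h : S.Reach x y) (h' : S.Reach x y')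
    (hy : S.Straddles q p y) (hy' : S.Straddles q p y') : y = y' := by
  induction h using Relation.ReflTransGen.head_induction_on with
  | refl => exact (h'.eq_of_straddles_of_covers hy hy'.1).symm
  | @head x c hxc hcy ih =>
    rcases h'.cases_head with rfl | ⟨c', hxc', hcy'⟩
    · exact Reach.eq_of_straddles_of_covers (.head hxc hcy) hy' hy.1
    · by_cases hcc : c = c'
      · exact ih (hcc ▸ hcy')
      · have hc := Reach.covers hcy hy.1
        have hc' := Reach.covers hcy' hy'.1
        have hq : 0 < q := by obtain ⟨-, _, _, -, h₁, h₂⟩ := hy; omega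
        unfold Covers at hc hc'
        rcases hxc.disjoint hxc' hcc with h | h <;> omega

theorem exists_reach_straddles (hq : 2 ≤ q) (x : Fin n × ℕ) (hx : S.Covers q p x) :
    ∃ y, S.Reach x y ∧ S.Straddles q p y := by
  rcases hrule : S.rule x.1 with a | ⟨l, r⟩
  · simp only [Covers, val_of_rule_inl hrule, List.length_singleton] at hx
    omega
  have hwf := S.wf _ _ _ hrule
  by_cases hl : S.Covers q p (l, x.2)
  · obtain ⟨y, hly, hy⟩ := exists_reach_straddles hq (l, x.2) hl
    exact ⟨y, .head ⟨l, r, hrule, .inl rfl⟩ hly, hy⟩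
  by_cases hr : S.Covers q p (r, x.2 + (S.val l).length)
  · obtain ⟨y, hry, hy⟩ := exists_reach_straddles hq _ hr
    exact ⟨y, .head ⟨l, r, hrule, .inr rfl⟩ hry, hy⟩
  have hlen : (S.val x.1).length = (S.val l).length + (S.val r).length := by
    simp [val_of_rule_inr hrule]
  refine ⟨x, .refl, hx, l, r, hrule, ?_⟩
  simp only [Covers] at hx hl hr
  omega
termination_by x.1.val
decreasing_by exacts [hwf.1, hwf.2]

section Root

variable (S) (hn : 0 < n)

def root : Fin n := ⟨n - 1, Nat.sub_lt hn one_pos⟩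

def offsets (i : Fin n) : Set ℕ := {o | S.Reach (root hn, 0) (i, o)}

def tstrOffset (q : ℕ) (i : Fin n) : ℕ :=
  match S.rule i with
  | .inl _ => 0
  | .inr (l, _) => (S.val l).length - (q - 1)

variable {S}

theorem offsets_root : S.offsets hn (root hn) = {0} := by
  ext o
  refine ⟨fun h => ?_, fun h => h ▸ .refl⟩
  have := Reach.nested h
  simp only at this
  exact Set.mem_singleton_iff.2 (by omega)

theorem finite_offsets (i : Fin n) : (S.offsets hn i).Finite :=
  (Set.finite_Iic (S.val (root hn)).length).subset fun o ho => by
    have := Reach.nested ho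
    simp only [Set.mem_Iic] at *
    omega

theorem itv_eq_image_offsets (i : Fin n) :
    S.itv i = (fun o => (o + 1, o + (S.val i).length)) '' S.offsets hn i := by
  rw [itv]
  split_ifs with hroot
  · obtain rfl : i = root hn := Fin.ext hroot
    simp [offsets_root hn]
  ext ⟨u, v⟩
  simp only [Set.mem_union, Set.mem_ofPred_eq, Set.mem_image, Prod.mk.injEq]
  constructor
  · rintro (⟨k, l, hk, uv, huv, huv'⟩ | ⟨k, r, hk, uv, huv, huv'⟩)
    · have := (S.wf _ _ _ hk).2
      rw [itv_eq_image_offsets k] at huv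
      obtain ⟨o, ho, rfl⟩ := huv
      refine ⟨o + (S.val l).length, ho.tail ⟨l, i, hk, .inr rfl⟩, ?_⟩
      simp only [val_of_rule_inr hk, List.length_append] at huv' ⊢
      omega
    · have := (S.wf _ _ _ hk).1
      rw [itv_eq_image_offsets k] at huv
      obtain ⟨o, ho, rfl⟩ := huv
      refine ⟨o, ho.tail ⟨i, r, hk, .inl rfl⟩, ?_⟩
      simp only at huv'
      omega
  · rintro ⟨o, ho, rfl, rfl⟩
    obtain ⟨⟨k, o'⟩, hk, l, r, hrule, hio | hio⟩ :=
      (Relation.ReflTransGen.cases_tail_iff _ _ _).1 ho |>.resolve_left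
        fun h => hroot (congrArg (·.1.val) h)
    · obtain ⟨rfl, rfl⟩ := Prod.mk.injEq .. ▸ hio
      have : i < k := (S.wf _ _ _ hrule).1
      refine .inr ⟨k, r, hrule, (o + 1, o + (S.val k).length), ?_, by simp⟩
      rw [itv_eq_image_offsets k]
      exact ⟨o, hk, rfl⟩
    · obtain ⟨rfl, rfl⟩ := Prod.mk.injEq .. ▸ hio
      have : i < k := (S.wf _ _ _ hrule).2
      refine .inl ⟨k, l, hrule, (o' + 1, o' + (S.val k).length), ?_, ?_⟩
      · rw [itv_eq_image_offsets k]
        exact ⟨o', hk, rfl⟩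
      · simp only [val_of_rule_inr hrule, List.length_append]
        omega
termination_by n - i.val
decreasing_by all_goals omega

theorem vOcc_eq_ncard_offsets (i : Fin n) : S.vOcc i = (S.offsets hn i).ncard := by
  rw [vOcc, itv_eq_image_offsets hn i]
  exact Set.ncard_image_of_injective _ fun a b h => by simpa using congrArg Prod.fst h

end Root

theorem tstrOffset_of_rule_inr {i l r : Fin n} (h : S.rule i = .inr (l, r)) :
    S.tstrOffset q i = (S.val l).length - (q - 1) := by
  rw [tstrOffset]; split <;> simp_all

theorem val_eq_append_tstr_append {i l r : Fin n} (h : S.rule i = .inr (l, r)) :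
    S.val i = (S.val l).take (S.tstrOffset q i) ++ S.tstr q i ++ (S.val r).drop (q - 1) := by
  rw [val_of_rule_inr h, tstr_of_rule_inr h, tstrOffset_of_rule_inr h, suf, pre]
  simp only [List.append_assoc, List.take_append_drop, ← List.append_assoc (List.take _ _)]

variable {hn : 0 < n} {P : List α}

theorem mem_Occ_and_straddles_iff (hq : 2 ≤ q) (hP : P.length = q) {i : Fin n} {o : ℕ}
    (ho : o ∈ S.offsets hn i) :
    p ∈ Occ (S.val (root hn)) P ∧ S.Straddles q p (i, o) ↔
      ∃ k ∈ Occ (S.tstr q i) P, o + S.tstrOffset q i + k = p := by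
  have hP0 : P ≠ [] := List.ne_nil_of_length_pos (by omega)
  rcases hrule : S.rule i with a | ⟨l, r⟩
  · simp [not_straddles_of_rule_inl (x := (i, o)) hrule, tstr_of_rule_inl hrule, Occ_nil hP0]
  obtain ⟨A, B, hT, hA⟩ := Reach.exists_append ho
  simp only [zero_add] at hA
  set X := (S.val l).take (S.tstrOffset q i)
  set Y := (S.val r).drop (q - 1)
  have hT' : S.val (root hn) = (A ++ X) ++ S.tstr q i ++ (Y ++ B) := by
    rw [hT, val_eq_append_tstr_append (q := q) hrule]
    simp only [X, Y, List.append_assoc]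
  have hlen : (A ++ X).length = o + S.tstrOffset q i := by
    simp [X, tstrOffset_of_rule_inr hrule, hA]
  have htlen := congrArg List.length (tstr_of_rule_inr (q := q) hrule)
  simp only [suf, pre, List.length_append, List.length_drop, List.length_take] at htlen
  have hd := tstrOffset_of_rule_inr (q := q) hrule
  rw [straddles_iff_of_rule_inr (x := (i, o)) hrule, hT']
  simp only [hlen, htlen, hP,
    mem_Occ_iff_add_mem_Occ_append (A := A ++ X) (W := S.tstr q i) (B := Y ++ B) hP0]
  constructor
  · rintro ⟨hp, h₁, h₂, h₃, h₄⟩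
    refine ⟨p - (o + S.tstrOffset q i), ⟨by omega, by omega, ?_⟩, by omega⟩
    rwa [Nat.add_sub_cancel' (by omega)]
  · rintro ⟨k, ⟨hk₀, hk, hp⟩, rfl⟩
    exact ⟨hp, by omega, by omega, by omega, by omega⟩

variable (S hn)

theorem ncard_Occ_eq_sum (hq : 2 ≤ q) (hP : P.length = q) :
    (Occ (S.val (root hn)) P).ncard = ∑ i, S.vOcc i * (Occ (S.tstr q i) P).ncard := by
  have hP0 : P ≠ [] := List.ne_nil_of_length_pos (by omega)
  have := fun i => (finite_offsets (S := S) hn i).to_subtype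
  have := fun i => (finite_Occ (T := S.tstr q i) hP0).to_subtype
  let g : (Σ i, S.offsets hn i × Occ (S.tstr q i) P) → ℕ :=
    fun a => a.2.1 + S.tstrOffset q a.1 + a.2.2
  have hg (a) : g a ∈ Occ (S.val (root hn)) P ∧ S.Straddles q (g a) (a.1, a.2.1) :=
    (mem_Occ_and_straddles_iff hq hP a.2.1.2).2 ⟨a.2.2, a.2.2.2, rfl⟩
  have hrange : Set.range g = Occ (S.val (root hn)) P := by
    refine Set.Subset.antisymm (Set.range_subset_iff.2 fun a => (hg a).1) fun p hp => ?_
    obtain ⟨hp₀, hpT⟩ := add_length_le_of_mem_Occ hP0 hp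
    obtain ⟨⟨i, o⟩, ho, hstr⟩ :=
      exists_reach_straddles hq (root hn, 0) ⟨hp₀, by simpa [hP] using hpT⟩
    obtain ⟨k, hk, rfl⟩ :=
      (mem_Occ_and_straddles_iff (i := i) (o := o) hq hP ho).1 ⟨hp, hstr⟩
    exact ⟨⟨i, ⟨o, ho⟩, ⟨k, hk⟩⟩, rfl⟩
  have hinj : g.Injective := by
    rintro ⟨i, o, k⟩ ⟨i', o', k'⟩ h
    have hstr := (hg ⟨i, o, k⟩).2
    rw [h] at hstr
    obtain ⟨rfl, ho⟩ := Prod.ext_iff.1 (Reach.eq_of_straddles o.2 o'.2 hstr (hg _).2)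
    obtain rfl : o = o' := Subtype.ext ho
    obtain rfl : k = k' := Subtype.ext (by simpa [g] using h)
    rfl
  rw [← hrange, ← Nat.card_coe_set_eq, Nat.card_range_of_injective hinj, Nat.card_sigma]
  simp only [Nat.card_prod, Nat.card_coe_set_eq, vOcc_eq_ncard_offsets hn]

end SLP

/-- correctness of the main algorithm: for `q ≥ 2` and every `q`-gram `P`,
`|Occ(T,P)| = Σ_{i : X_i = X_ℓ X_r} vOcc(X_i) · |Occ(t_i, P)|`. -/
theorem slp_qgram_frequency {α : Type*} {n : ℕ} (S : SLP α n) (hn : 0 < n)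
    (q : ℕ) (hq : 2 ≤ q) (P : List α) (hP : P.length = q) :
    (Occ (S.val ⟨n - 1, Nat.sub_lt hn one_pos⟩) P).ncard =
      ∑ i : Fin n,
        (match S.rule i with
          | Sum.inl _ => 0
          | Sum.inr _ => S.vOcc i * (Occ (S.tstr q i) P).ncard) := by
  have hP0 : P ≠ [] := List.ne_nil_of_length_pos (by omega)
  refine (S.ncard_Occ_eq_sum hn hq hP).trans (Finset.sum_congr rfl fun i _ => ?_)
  rcases h : S.rule i with a | _
  · simp [SLP.tstr_of_rule_inl h, Occ_nil hP0]
  · rfl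
end

section
/- (Correctness of suffix-array q-gram counting) Let T be a nonempty string over a linearly ordered alphabet and let q ≥ 1. Let s_1 < s_2 < … < s_{|T|} be the |T| suffixes T[j:|T|] (1 ≤ j ≤ |T|) of T listed in increasing lexicographic order (the suffixes are pairwise distinct since they have pairwise distinct lengths). Then the number of distinct length-q substrings of T equals the number of indices i such that |s_i| ≥ q and either i = 1 or the longest common prefix of s_{i−1} and s_i has length less than q. -/
/-- `ℓ(s,t)`: the length of the longest common prefix of `s` and `t`. -/
def lcpLength {α : Type*} [DecidableEq α] : List α → List α → ℕ
  | a :: s, b :: t => if a = b then lcpLength s t + 1 else 0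
  | _, _ => 0

theorem List.monotone_take {α : Type*} [LinearOrder α] (q : ℕ) :
    Monotone (List.take q : List α → List α) := by
  intro s t hst
  obtain hlt | rfl := hst.lt_or_eq
  · clear hst
    induction hlt generalizing q with
    | nil => simpa only [List.take_nil] using not_lt.mp (List.not_lt_nil _)
    | cons _ ih =>
      cases q with
      | zero => exact le_rfl
      | succ q => exact List.cons_le_cons _ (ih q)
    | rel hab =>
      cases q with
      | zero => exact le_rfl
      | succ q => exact le_of_lt (List.Lex.rel hab)
  · exact le_rfl

theorem le_lcpLength_iff {α : Type*} [DecidableEq α] {q : ℕ} {s t : List α} :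
    q ≤ lcpLength s t ↔ q ≤ t.length ∧ s.take q = t.take q := by
  induction s generalizing t q with
  | nil => cases q <;> cases t <;> simp [lcpLength]
  | cons a s ih =>
    cases q with
    | zero => simp
    | succ q =>
      cases t with
      | nil => simp [lcpLength]
      | cons b t =>
        by_cases hab : a = b
        · simp [lcpLength, hab, ih]
        · simp [lcpLength, hab]

theorem lcpLength_lt_iff_take_ne {α : Type*} [DecidableEq α] {q : ℕ} {s t : List α}
    (ht : q ≤ t.length) : lcpLength s t < q ↔ s.take q ≠ t.take q := by
  rw [← not_le, le_lcpLength_iff, and_iff_right ht]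

theorem exists_substr_eq_iff {α : Type*} {T P : List α} {q : ℕ} (hq : 1 ≤ q) :
    (∃ k, 1 ≤ k ∧ k + q - 1 ≤ T.length ∧ substr T k (k + q - 1) = P) ↔
      ∃ j : Fin T.length, (T.drop j).take q = P ∧ P.length = q := by
  constructor
  · rintro ⟨k, hk, hkT, rfl⟩
    refine ⟨⟨k - 1, by omega⟩, ?_, ?_⟩
    · rw [substr, show k + q - 1 + 1 - k = q by omega]
    · simp only [substr, List.length_take, List.length_drop]
      omega
  · rintro ⟨j, rfl, hlen⟩
    simp only [List.length_take, List.length_drop] at hlen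
    refine ⟨j + 1, by omega, by omega, ?_⟩
    rw [substr, show j + 1 + q - 1 + 1 - (j + 1) = q by omega, Nat.add_sub_cancel]

theorem Monotone.card_filter_image {β : Type*} [PartialOrder β] [DecidableEq β] {n : ℕ}
    {f : Fin n → β} (hf : Monotone f) (p : β → Prop) [DecidablePred p] :
    ((Finset.univ.image f).filter p).card =
      (Finset.univ.filter fun i : Fin n =>
        p (f i) ∧ ((i : ℕ) = 0 ∨ f ⟨(i : ℕ) - 1, by omega⟩ ≠ f i)).card := by
  set S := Finset.univ.filter fun i : Fin n =>
    p (f i) ∧ ((i : ℕ) = 0 ∨ f ⟨(i : ℕ) - 1, by omega⟩ ≠ f i)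
  have hinj : Set.InjOn f S := by
    have key : ∀ i j : Fin n, i < j → j ∈ S → f i ≠ f j := by
      intro i j hij hj hfij
      have hij' : (i : ℕ) < j := hij
      obtain ⟨-, hj0 | hjprev⟩ := (Finset.mem_filter.mp hj).2
      · omega
      refine hjprev (le_antisymm (hf (Fin.mk_le_of_le_val (by omega))) ?_)
      exact hfij ▸ hf (Fin.le_def.mpr (by simp only; omega))
    intro i hi j hj hfij
    rcases lt_trichotomy i j with h | h | h
    · exact absurd hfij (key i j h hj)
    · exact h
    · exact absurd hfij.symm (key j i h hi)
  rw [← Finset.card_image_of_injOn hinj]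
  congr 1
  ext b
  simp only [Finset.mem_filter, Finset.mem_image, Finset.mem_univ, true_and, S]
  constructor
  · rintro ⟨⟨i, rfl⟩, hb⟩
    obtain ⟨j, hj, hjmin⟩ := wellFounded_lt.has_min {k | f k = f i} ⟨i, rfl⟩
    refine ⟨j, ⟨hj ▸ hb, ?_⟩, hj⟩
    by_contra! hfirst
    exact hjmin ⟨(j : ℕ) - 1, by omega⟩ (hfirst.2.trans hj) (Fin.lt_def.mpr (by simp only; omega))
  · rintro ⟨i, ⟨hi, -⟩, rfl⟩
    exact ⟨⟨i, rfl⟩, hi⟩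

theorem suffix_array_qgram_count_general {α : Type*} [LinearOrder α]
    (T : List α) (q : ℕ) (hq : 1 ≤ q)
    (e : Fin T.length → Fin T.length) (he : Function.Bijective e)
    (hsorted : ∀ i j : Fin T.length, i < j → T.drop (e i) < T.drop (e j)) :
    {P : List α | ∃ k, 1 ≤ k ∧ k + q - 1 ≤ T.length ∧ substr T k (k + q - 1) = P}.ncard =
      (Finset.univ.filter (fun i : Fin T.length =>
        q ≤ (T.drop (e i)).length ∧
          ((i : ℕ) = 0 ∨
            lcpLength (T.drop (e ⟨(i : ℕ) - 1, lt_of_le_of_lt (Nat.sub_le _ _) i.isLt⟩))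
              (T.drop (e i)) < q))).card := by
  classical
  set g : Fin T.length → List α := fun i => (T.drop (e i)).take q
  have hg : Monotone g :=
    (List.monotone_take q).comp (StrictMono.monotone fun i j => hsorted i j)
  have hqgrams : {P : List α | ∃ k, 1 ≤ k ∧ k + q - 1 ≤ T.length ∧ substr T k (k + q - 1) = P} =
      ↑((Finset.univ.image g).filter (·.length = q)) := by
    ext P
    rw [Set.mem_ofPred_eq, exists_substr_eq_iff hq, he.surjective.exists]
    simp [g]
  rw [hqgrams, Set.ncard_coe_finset, hg.card_filter_image]
  congr 1
  refine Finset.filter_congr fun i _ => ?_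
  have hlen : (g i).length = q ↔ q ≤ (T.drop (e i)).length := by
    simp [g, List.length_take]
  rw [hlen]
  exact and_congr_right fun hi => or_congr_right (lcpLength_lt_iff_take_ne hi).symm

/-- correctness of suffix-array q-gram counting: let `T` be nonempty,
`q ≥ 1`, and let `e` enumerate the `|T|` (pairwise distinct) nonempty suffixes of `T`
in increasing lexicographic order, i.e. `e` is a bijection on `Fin |T|` and
`i < j → T.drop (e i) < T.drop (e j)`.  Then the number of distinct length-`q` substrings
of `T` equals the number of indices `i` such that the `i`-th sorted suffix has length `≥ q`
and either `i` is the first index or the longest common prefix of the `(i-1)`-st and `i`-th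
sorted suffixes has length `< q`. -/
theorem suffix_array_qgram_count {α : Type*} [LinearOrder α]
    (T : List α) (hT : T ≠ []) (q : ℕ) (hq : 1 ≤ q)
    (e : Fin T.length → Fin T.length) (he : Function.Bijective e)
    (hsorted : ∀ i j : Fin T.length, i < j → T.drop (e i) < T.drop (e j)) :
    {P : List α | ∃ k, 1 ≤ k ∧ k + q - 1 ≤ T.length ∧ substr T k (k + q - 1) = P}.ncard =
      (Finset.univ.filter (fun i : Fin T.length =>
        q ≤ (T.drop (e i)).length ∧
          ((i : ℕ) = 0 ∨
            lcpLength (T.drop (e ⟨(i : ℕ) - 1, lt_of_le_of_lt (Nat.sub_le _ _) i.isLt⟩))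
              (T.drop (e i)) < q))).card :=
  suffix_array_qgram_count_general T q hq e he hsorted
end

section
/- (Per-occurrence crossing bijection) Let X_1,…,X_n be an SLP representing T = val(X_n), let q ≥ 2, let X_i = X_ℓ X_r be a variable, let [u':v'] ∈ itv(X_i), and set b = u' + |val(X_ℓ)|. Then for every q-gram P ∈ Σ^q, the number of positions k with u' ≤ k, k + q − 1 ≤ v', k ≤ b − 1, k + q − 1 ≥ b, and T[k:k+q−1] = P (i.e., the number of occurrences of P inside this occurrence interval of X_i that cross the boundary between the X_ℓ-part and the X_r-part) equals |Occ(t_i, P)|. -/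
/-- `T[u:v] = W` in the 1-indexed convention of `substr`, with `[u:v]` of length exactly `|W|`. -/
structure IsOccurrence {α : Type*} (T W : List α) (u v : ℕ) : Prop where
  one_le : 1 ≤ u
  end_eq : v + 1 = u + W.length
  isPrefix_drop : W <+: T.drop (u - 1)

namespace IsOccurrence

variable {α : Type*} {T W : List α} {u v : ℕ}

theorem of_isPrefix_drop {W' : List α} (h : IsOccurrence T W u v) (p : ℕ)
    (hW' : W' <+: W.drop p) : IsOccurrence T W' (u + p) (u + p + W'.length - 1) := by
  have hu := h.one_le
  refine ⟨by omega, by omega, ?_⟩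
  have hp := hW'.trans (h.isPrefix_drop.drop p)
  rwa [List.drop_drop, show u - 1 + p = u + p - 1 by omega] at hp

theorem append_left {A B : List α} (h : IsOccurrence T (A ++ B) u v) :
    IsOccurrence T A u (u + A.length - 1) := by
  simpa using h.of_isPrefix_drop 0 (List.prefix_append A B)

theorem append_right {A B : List α} (h : IsOccurrence T (A ++ B) u v) :
    IsOccurrence T B (u + A.length) v := by
  have h' := h.of_isPrefix_drop (W' := B) A.length (by simp)
  have hv := h.end_eq
  rw [List.length_append] at hv
  rwa [show u + A.length + B.length - 1 = v by omega] at h'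

end IsOccurrence

namespace SLP

variable {α : Type*} {n : ℕ}

theorem val_eq_append (S : SLP α n) {i l r : Fin n} (h : S.rule i = Sum.inr (l, r)) :
    S.val i = S.val l ++ S.val r := by
  rw [SLP.val]
  split <;> simp_all

theorem isOccurrence_of_mem_itv (S : SLP α n) (hn : 0 < n) {i : Fin n} {u v : ℕ}
    (h : (u, v) ∈ S.itv i) :
    IsOccurrence (S.val ⟨n - 1, Nat.sub_lt hn one_pos⟩) (S.val i) u v := by
  rw [SLP.itv] at h
  split_ifs at h with hi
  · obtain ⟨rfl, rfl⟩ := Prod.mk.inj (Set.mem_singleton_iff.mp h)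
    obtain rfl : i = ⟨n - 1, Nat.sub_lt hn one_pos⟩ := Fin.ext hi
    exact ⟨le_rfl, by omega, by simp⟩
  · rcases h with ⟨k, l, hk, ⟨u₀, v₀⟩, huv, heq⟩ | ⟨k, r, hk, ⟨u₀, v₀⟩, huv, heq⟩
    · have hocc := S.isOccurrence_of_mem_itv hn huv
      rw [S.val_eq_append hk] at hocc
      obtain ⟨rfl, rfl⟩ := Prod.mk.inj heq
      exact hocc.append_right
    · have hocc := S.isOccurrence_of_mem_itv hn huv
      rw [S.val_eq_append hk] at hocc
      obtain ⟨rfl, rfl⟩ := Prod.mk.inj heq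
      exact hocc.append_left
termination_by n - i
decreasing_by
  · have := (S.wf k l i hk).2; omega
  · have := (S.wf k i r hk).1; omega

end SLP

theorem List.IsPrefix.isPrefix_drop_iff {α : Type*} {W L P : List α} (h : W <+: L) {p : ℕ}
    (hp : p + P.length ≤ W.length) : P <+: W.drop p ↔ P <+: L.drop p := by
  rw [List.prefix_iff_eq_take.mp h, List.drop_take, List.prefix_take_iff]
  exact and_iff_left (by omega)

theorem substr_eq_iff_isPrefix_drop {α : Type*} {L P : List α} {k : ℕ} (hk : 1 ≤ k) :
    substr L k (k + P.length - 1) = P ↔ P <+: L.drop (k - 1) := by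
  rw [substr, show k + P.length - 1 + 1 - k = P.length by omega, List.prefix_iff_eq_take, eq_comm]

theorem suf_append_pre_isPrefix_drop {α : Type*} (A B : List α) (m : ℕ) :
    suf A m ++ pre B m <+: (A ++ B).drop (A.length - m) := by
  rw [List.drop_append_of_le_length (Nat.sub_le _ _)]
  exact List.prefix_append_right_inj _ |>.mpr (List.take_prefix _ _)

theorem IsOccurrence.setOf_substr_eq_eq_image_Occ {α : Type*} {T W P : List α} {u v : ℕ}
    (h : IsOccurrence T W u v) (hP : P ≠ []) :
    {k | u ≤ k ∧ k + P.length ≤ v + 1 ∧ substr T k (k + P.length - 1) = P} =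
      (· + (u - 1)) '' Occ W P := by
  have hu := h.one_le
  have hv := h.end_eq
  have hPlen := List.length_pos_iff.mpr hP
  ext k
  simp only [Set.mem_ofPred_eq, Set.mem_image, Occ]
  constructor
  · rintro ⟨hk, hkv, hsub⟩
    refine ⟨k + 1 - u, ⟨by omega, ?_⟩, by omega⟩
    rw [substr_eq_iff_isPrefix_drop (by omega), h.isPrefix_drop.isPrefix_drop_iff (by omega),
      List.drop_drop, show u - 1 + (k + 1 - u - 1) = k - 1 by omega]
    exact (substr_eq_iff_isPrefix_drop (by omega)).mp hsub
  · rintro ⟨j, ⟨hj, hsub⟩, rfl⟩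
    rw [substr_eq_iff_isPrefix_drop hj] at hsub
    have hlen : j - 1 + P.length ≤ W.length := by
      have := hsub.length_le; simp only [List.length_drop] at this; omega
    refine ⟨by omega, by omega, ?_⟩
    rw [substr_eq_iff_isPrefix_drop (by omega), show j + (u - 1) - 1 = u - 1 + (j - 1) by omega,
      ← List.drop_drop, ← h.isPrefix_drop.isPrefix_drop_iff hlen]
    exact hsub

/-- per-occurrence crossing bijection: for `q ≥ 2`, a concatenation variable
`X_i = X_ℓ X_r`, an occurrence interval `[u':v'] ∈ itv(X_i)` with boundary
`b = u' + |val(X_ℓ)|`, and every `q`-gram `P`: the number of positions `k` with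
`u' ≤ k`, `k + q - 1 ≤ v'`, `k ≤ b - 1`, `b ≤ k + q - 1` and `T[k:k+q-1] = P`
(occurrences of `P` inside this occurrence of `X_i` crossing the boundary)
equals `|Occ(t_i, P)|` where `t_i = suf(val(X_ℓ),q-1)·pre(val(X_r),q-1)`. -/
theorem slp_crossing_occurrences {α : Type*} {n : ℕ} (S : SLP α n) (hn : 0 < n)
    (q : ℕ) (hq : 2 ≤ q) (i : Fin n) (l r : Fin n) (hrule : S.rule i = Sum.inr (l, r))
    (u' v' : ℕ) (hint : (u', v') ∈ S.itv i) (P : List α) (hP : P.length = q) :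
    {k : ℕ | u' ≤ k ∧ k + q - 1 ≤ v' ∧ k ≤ u' + (S.val l).length - 1 ∧
        u' + (S.val l).length ≤ k + q - 1 ∧
        substr (S.val ⟨n - 1, Nat.sub_lt hn one_pos⟩) k (k + q - 1) = P}.ncard =
      (Occ (suf (S.val l) (q - 1) ++ pre (S.val r) (q - 1)) P).ncard := by
  have hocc := S.isOccurrence_of_mem_itv hn hint
  rw [S.val_eq_append hrule] at hocc
  have hv := hocc.end_eq
  have hu := hocc.one_le
  have ht := hocc.of_isPrefix_drop _ (suf_append_pre_isPrefix_drop (S.val l) (S.val r) (q - 1))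
  have hwin := ht.setOf_substr_eq_eq_image_Occ (P := P) (List.ne_nil_of_length_pos (by omega))
  rw [← Set.ncard_image_of_injective (Occ _ P) (add_left_injective _), ← hwin]
  congr 1
  ext k
  simp only [Set.mem_ofPred_eq, hP, suf, pre, List.length_append, List.length_drop,
    List.length_take] at hv ⊢
  constructor
  · rintro ⟨h₁, h₂, h₃, h₄, hsub⟩
    exact ⟨by omega, by omega, hsub⟩
  · rintro ⟨h₁, h₂, hsub⟩
    exact ⟨by omega, by omega, by omega, by omega, hsub⟩
end
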